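/- Let E be a Hausdorff locally convex real topological vector space and let A ⊆ E be closed, convex, and contain 0. Then the Minkowski gauge of A equals the support function of the polar of A: for every x ∈ E, 𝒟_A(x) = sup {f(x) : f ∈ A°}, where A° = {f : E → ℝ continuous linear | f(a) ≤ 1 for all a ∈ A} and both sides are understood as elements of [0,∞]. -/

import Mathlib

/-!
The inequality `sup ≤ 𝒟_A` is immediate: if `f ≤ 1` on `A` and `m⁻¹ • x ∈ A`, then `f x ≤ m`.
Conversely, if `ofReal m < 𝒟_A x` then `m⁻¹ • x ∉ A`, and Hahn–Banach separates this point from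
the closed convex set `A`; since `0 ∈ A` the separating level is positive, so after rescaling we
get an element `g` of the polar with `1 < g (m⁻¹ • x)`, i.e. `m < g x`.
-/

open ENNReal

/-- The Minkowski gauge of a set `A` in a real vector space, with values in `[0,∞]`
(the infimum of the empty set being `∞`). -/
noncomputable def mgauge {E : Type*} [AddCommGroup E] [Module ℝ E] (A : Set E) (x : E) : ℝ≥0∞ :=
  sInf {r : ℝ≥0∞ | ∃ m : ℝ, 0 < m ∧ m⁻¹ • x ∈ A ∧ r = ENNReal.ofReal m}

section Gauge

variable {E : Type*} [AddCommGroup E] [Module ℝ E] {A : Set E} {x : E}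

theorem mgauge_le_ofReal {m : ℝ} (hm : 0 < m) (hx : m⁻¹ • x ∈ A) :
    mgauge A x ≤ ENNReal.ofReal m :=
  sInf_le ⟨m, hm, hx, rfl⟩

theorem ofReal_le_mgauge_of_forall_le_one (f : E →ₗ[ℝ] ℝ) (hf : ∀ a ∈ A, f a ≤ 1) :
    ENNReal.ofReal (f x) ≤ mgauge A x := by
  refine le_sInf ?_
  rintro _ ⟨m, hm, hmx, rfl⟩
  have hle : m⁻¹ * f x ≤ 1 := by simpa using hf _ hmx
  exact ENNReal.ofReal_le_ofReal (by rwa [inv_mul_le_iff₀ hm, mul_one] at hle)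

end Gauge

theorem exists_forall_le_one_one_lt_of_notMem {E : Type*} [TopologicalSpace E] [AddCommGroup E]
    [Module ℝ E] [IsTopologicalAddGroup E] [ContinuousSMul ℝ E] [LocallyConvexSpace ℝ E]
    {A : Set E} (hA : IsClosed A) (hconv : Convex ℝ A) (h0 : (0 : E) ∈ A) {y : E} (hy : y ∉ A) :
    ∃ g : E →L[ℝ] ℝ, (∀ a ∈ A, g a ≤ 1) ∧ 1 < g y := by
  obtain ⟨f, u, hfA, hfy⟩ := geometric_hahn_banach_closed_point hconv hA hy
  have hu : 0 < u := by simpa using hfA 0 h0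
  refine ⟨u⁻¹ • f, fun a ha => ?_, ?_⟩
  · rw [smul_apply, smul_eq_mul, inv_mul_le_iff₀ hu, mul_one]
    exact (hfA a ha).le
  · rwa [smul_apply, smul_eq_mul, lt_inv_mul_iff₀ hu, mul_one]

theorem stmt_19_general {E : Type*} [TopologicalSpace E] [AddCommGroup E] [Module ℝ E]
    [IsTopologicalAddGroup E] [ContinuousSMul ℝ E] [LocallyConvexSpace ℝ E]
    (A : Set E) (hA : IsClosed A) (hconv : Convex ℝ A) (h0 : (0 : E) ∈ A) (x : E) :
    mgauge A x = ⨆ f : E →L[ℝ] ℝ, ⨆ _ : ∀ a ∈ A, f a ≤ 1, ENNReal.ofReal (f x) := by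
  refine le_antisymm (le_of_forall_lt fun c hc => ?_)
    (iSup₂_le fun f hf => ofReal_le_mgauge_of_forall_le_one (f : E →ₗ[ℝ] ℝ) hf)
  obtain ⟨m, -, hcm, hmx⟩ := ENNReal.lt_iff_exists_real_btwn.1 hc
  have hm : 0 < m := ENNReal.ofReal_pos.1 (pos_of_gt hcm)
  have hnotMem : m⁻¹ • x ∉ A := fun h => (mgauge_le_ofReal hm h).not_gt hmx
  obtain ⟨g, hgA, hgx⟩ := exists_forall_le_one_one_lt_of_notMem hA hconv h0 hnotMem
  have hmg : m < g x := by
    rwa [map_smul, smul_eq_mul, lt_inv_mul_iff₀ hm, mul_one] at hgx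
  calc c < ENNReal.ofReal m := hcm
    _ < ENNReal.ofReal (g x) := (ENNReal.ofReal_lt_ofReal_iff (hm.trans hmg)).2 hmg
    _ ≤ ⨆ f : E →L[ℝ] ℝ, ⨆ _ : ∀ a ∈ A, f a ≤ 1, ENNReal.ofReal (f x) :=
      le_iSup₂_of_le g hgA le_rfl

/-- Dual representation: for a closed convex set containing the origin, the Minkowski gauge
equals the support function of the polar set
`A° = {f : E →L[ℝ] ℝ | f a ≤ 1 for all a ∈ A}`. -/
theorem stmt_19 {E : Type*} [TopologicalSpace E] [AddCommGroup E] [Module ℝ E]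
    [IsTopologicalAddGroup E] [ContinuousSMul ℝ E] [LocallyConvexSpace ℝ E] [T2Space E]
    (A : Set E) (hA : IsClosed A) (hconv : Convex ℝ A) (h0 : (0 : E) ∈ A) (x : E) :
    mgauge A x = ⨆ f : E →L[ℝ] ℝ, ⨆ _ : ∀ a ∈ A, f a ≤ 1, ENNReal.ofReal (f x) :=
  stmt_19_general A hA hconv h0 x
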